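/- Consider an instance of the MST problem under explorable uncertainty with unique T_L = T_U. Let l_i ∈ C_i ∖ {f_i} with I_{l_i} ∩ I_{f_i} ≠ ∅ be such that l_i ∉ C_j for all j < i. Then {l_i, f_i} is a witness set; furthermore, if the true value w_{l_i} lies in I_{f_i}, then {f_i} is a witness set (i.e., f_i is mandatory). -/

import Mathlib

/-!
Common framework: the minimum spanning tree problem under explorable
uncertainty with (untrusted) predictions.
-/

open scoped BigOperators
open scoped Classical

noncomputable section

/-- An instance of the MST problem under explorable uncertainty with predictions:
a connected (multi)graph whose edges carry uncertainty intervals (open `(L,U)` for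
non-trivial edges, i.e. `L < U`, and the singleton `{L}` for trivial edges, i.e. `L = U`)
together with predicted values `pw e` lying in the intervals. -/
structure UncGraph where
  V : Type
  E : Type
  fintV : Fintype V
  fintE : Fintype E
  decV : DecidableEq V
  decE : DecidableEq E
  ends : E → Sym2 V
  conn : ∀ u v : V, Relation.ReflTransGen (fun a b => ∃ e : E, ends e = s(a, b)) u v
  L : E → ℝ
  U : E → ℝ
  LU : ∀ e, L e ≤ U e
  pw : E → ℝ
  pw_mem : ∀ e, (L e = U e ∧ pw e = L e) ∨ (L e < pw e ∧ pw e < U e)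

attribute [instance] UncGraph.fintV UncGraph.fintE UncGraph.decV UncGraph.decE

namespace UncGraph

variable (G : UncGraph)

/-- The uncertainty interval of an edge: the open interval `(L e, U e)` for a
non-trivial edge, the singleton `{L e}` for a trivial edge (`L e = U e`). -/
def I (e : G.E) : Set ℝ :=
  {x | (G.L e = G.U e ∧ x = G.L e) ∨ (G.L e < x ∧ x < G.U e)}

/-- A trivial edge: its interval is a singleton. -/
def TrivialEdge (e : G.E) : Prop := G.L e = G.U e

/-- A non-trivial edge: its interval is a nonempty open interval. -/
def NontrivialEdge (e : G.E) : Prop := G.L e < G.U e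

/-- `w` is a valid realization of true edge weights. -/
def Valid (w : G.E → ℝ) : Prop := ∀ e, w e ∈ G.I e

/-- Connectivity of two vertices using only edges from `S`. -/
def ConnectsVia (S : Finset G.E) (u v : G.V) : Prop :=
  Relation.ReflTransGen (fun a b => ∃ e ∈ S, G.ends e = s(a, b)) u v

/-- `S` is a spanning tree: it connects all vertices and has `|V| - 1` edges. -/
def IsSpanningTree (S : Finset G.E) : Prop :=
  (∀ u v : G.V, G.ConnectsVia S u v) ∧ S.card + 1 = Fintype.card G.V

/-- `T` is a minimum spanning tree with respect to the weight function `wf`. -/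
def IsMST (wf : G.E → ℝ) (T : Finset G.E) : Prop :=
  G.IsSpanningTree T ∧ ∀ T', G.IsSpanningTree T' → ∑ e ∈ T, wf e ≤ ∑ e ∈ T', wf e

/-- `wf` agrees with the true values `w` on the queried set `Q` and lies in the
uncertainty intervals elsewhere. -/
def Compatible (w : G.E → ℝ) (Q : Finset G.E) (wf : G.E → ℝ) : Prop :=
  (∀ e ∈ Q, wf e = w e) ∧ ∀ e, wf e ∈ G.I e

/-- The query set `Q` verifies `T`: `T` is an MST for every weight function
compatible with the revealed values. -/
def Verifies (w : G.E → ℝ) (Q T : Finset G.E) : Prop :=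
  ∀ wf, G.Compatible w Q wf → G.IsMST wf T

/-- `Q` is a feasible query set for true values `w`. -/
def Feasible (w : G.E → ℝ) (Q : Finset G.E) : Prop :=
  ∃ T, G.Verifies w Q T

/-- The minimum cardinality of a feasible query set. -/
def optCost (w : G.E → ℝ) : ℕ :=
  sInf {n | ∃ Q, G.Feasible w Q ∧ Q.card = n}

/-- `Q` is an optimal (minimum-cardinality feasible) query set. -/
def IsOptimal (w : G.E → ℝ) (Q : Finset G.E) : Prop :=
  G.Feasible w Q ∧ ∀ Q', G.Feasible w Q' → Q.card ≤ Q'.card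

/-- An edge is mandatory if it belongs to every feasible query set. -/
def Mandatory (w : G.E → ℝ) (e : G.E) : Prop :=
  ∀ Q, G.Feasible w Q → e ∈ Q

/-- A witness set intersects every feasible query set. -/
def IsWitnessSet (w : G.E → ℝ) (W : Finset G.E) : Prop :=
  ∀ Q, G.Feasible w Q → ∃ e ∈ W, e ∈ Q

/-- An edge is prediction mandatory if it is mandatory under the assumption that
all queries return the predicted values. -/
def PredMandatory (e : G.E) : Prop := G.Mandatory G.pw e

/-- An instance is prediction mandatory free if it has no prediction mandatory edge. -/
def PredMandatoryFree : Prop := ∀ e, ¬ G.PredMandatory e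

/-- Hop-distance indicator `k_{e'}(e)`: `0` if the prediction `p e` has the same
relation to the interval `I e'` as the true value `w e` (both `≤ L e'`, both
`≥ U e'`, or both strictly inside), and `1` otherwise. -/
def kErr (p w : G.E → ℝ) (e e' : G.E) : ℕ :=
  if (p e ≤ G.L e' ∧ w e ≤ G.L e') ∨ (G.U e' ≤ p e ∧ G.U e' ≤ w e) ∨
      (G.L e' < p e ∧ p e < G.U e' ∧ G.L e' < w e ∧ w e < G.U e')
  then 0 else 1

/-- `h→(e) = Σ_{e' ≠ e} k_{e'}(e)`. -/
def hright (p w : G.E → ℝ) (e : G.E) : ℕ :=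
  ∑ e' ∈ Finset.univ.erase e, G.kErr p w e e'

/-- `h←(e) = Σ_{e' ≠ e} k_e(e')`. -/
def hleft (p w : G.E → ℝ) (e : G.E) : ℕ :=
  ∑ e' ∈ Finset.univ.erase e, G.kErr p w e' e

/-- `h→(E') = Σ_{e ∈ E'} h→(e)`. -/
def hrightSum (p w : G.E → ℝ) (S : Finset G.E) : ℕ := ∑ e ∈ S, G.hright p w e

/-- `h←(E') = Σ_{e ∈ E'} h←(e)`. -/
def hleftSum (p w : G.E → ℝ) (S : Finset G.E) : ℕ := ∑ e ∈ S, G.hleft p w e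

/-- The hop distance of prediction `p` for realization `w`. -/
def hopDist (p w : G.E → ℝ) : ℕ := ∑ e, G.hright p w e

/-- The hop distance `k_h` of the instance's predictions for realization `w`. -/
def khop (w : G.E → ℝ) : ℕ := G.hopDist G.pw w

/-- Lower-limit weights `w^L`: `L e + ε` for non-trivial edges, the known value
for trivial edges. -/
def lowerWeight (ε : ℝ) (e : G.E) : ℝ := if G.L e = G.U e then G.L e else G.L e + ε

/-- Upper-limit weights `w^U`: `U e - ε` for non-trivial edges, the known value
for trivial edges. -/
def upperWeight (ε : ℝ) (e : G.E) : ℝ := if G.L e = G.U e then G.L e else G.U e - ε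

/-- `T` is a lower limit tree: an MST for `w^L` for all sufficiently small `ε > 0`. -/
def IsLowerLimitTree (T : Finset G.E) : Prop :=
  ∃ ε₀ > (0 : ℝ), ∀ ε : ℝ, 0 < ε → ε < ε₀ → G.IsMST (G.lowerWeight ε) T

/-- `T` is an upper limit tree: an MST for `w^U` for all sufficiently small `ε > 0`. -/
def IsUpperLimitTree (T : Finset G.E) : Prop :=
  ∃ ε₀ > (0 : ℝ), ∀ ε : ℝ, 0 < ε → ε < ε₀ → G.IsMST (G.upperWeight ε) T

/-- `T` is simultaneously the unique lower limit tree and the unique upper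
limit tree (`T_L = T_U`, both unique). -/
def UniqueLimitTrees (T : Finset G.E) : Prop :=
  G.IsLowerLimitTree T ∧ G.IsUpperLimitTree T ∧
  (∀ T', G.IsLowerLimitTree T' → T' = T) ∧
  (∀ T', G.IsUpperLimitTree T' → T' = T)

/-- Number of edge-ends of `S` incident to `v` (loops count twice). -/
def incCount (S : Finset G.E) (v : G.V) : ℕ :=
  ∑ e ∈ S, (if G.ends e = s(v, v) then 2 else if v ∈ G.ends e then 1 else 0)

/-- `S` forms a single cycle: nonempty, every vertex has degree `0` or `2`,
and the support is connected. -/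
def IsCycle (S : Finset G.E) : Prop :=
  S.Nonempty ∧ (∀ v, G.incCount S v = 0 ∨ G.incCount S v = 2) ∧
  ∀ u v, G.incCount S u ≠ 0 → G.incCount S v ≠ 0 → G.ConnectsVia S u v

/-- `C` is the cycle closed by adding the edge `f` to the tree `T`. -/
def IsCycleOf (T : Finset G.E) (f : G.E) (C : Finset G.E) : Prop :=
  G.IsCycle C ∧ f ∈ C ∧ C ⊆ insert f T

/-- `e'` lies in the cut `X_e` between the two components of `T \ {e}`. -/
def InCut (T : Finset G.E) (e e' : G.E) : Prop :=
  ∀ u v : G.V, G.ends e' = s(u, v) → ¬ G.ConnectsVia (T.erase e) u v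

/-- `S` is a path between the (distinct) vertices `a` and `b`. -/
def IsPathBetween (S : Finset G.E) (a b : G.V) : Prop :=
  a ≠ b ∧ G.incCount S a = 1 ∧ G.incCount S b = 1 ∧
  (∀ v, v ≠ a → v ≠ b → G.incCount S v = 0 ∨ G.incCount S v = 2) ∧
  ∀ v, G.incCount S v ≠ 0 → G.ConnectsVia S a v

/-- `{f, l}` is an edge of the vertex cover instance `Ḡ` (w.r.t. the tree `T`):
`f ∉ T`, `l ≠ f` lies on the cycle closed by `f`, both are non-trivial, and
their intervals intersect. -/
def VCEdge (T : Finset G.E) (f l : G.E) : Prop :=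
  f ∉ T ∧ l ≠ f ∧ G.NontrivialEdge f ∧ G.NontrivialEdge l ∧
  (∃ C, G.IsCycleOf T f C ∧ l ∈ C) ∧ (G.I f ∩ G.I l).Nonempty

/-- Adjacency in the vertex cover instance `Ḡ` (symmetrized). -/
def VCAdj (T : Finset G.E) (a b : G.E) : Prop := G.VCEdge T a b ∨ G.VCEdge T b a

/-- `S` is a vertex cover of the vertex cover instance `Ḡ`. -/
def IsVCCover (T S : Finset G.E) : Prop :=
  ∀ a b, G.VCAdj T a b → a ∈ S ∨ b ∈ S

/-- `S` is a minimum vertex cover of the vertex cover instance `Ḡ`. -/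
def IsMinVC (T S : Finset G.E) : Prop :=
  G.IsVCCover T S ∧ ∀ S', G.IsVCCover T S' → S.card ≤ S'.card

/-- Edge `e` does not occur in the instance anymore: independently of the
remaining uncertainty it can be deleted (some MST avoids it, for every
realization) or contracted (some MST contains it, for every realization). -/
def Removable (e : G.E) : Prop :=
  (∀ wf : G.E → ℝ, (∀ e', wf e' ∈ G.I e') → ∃ T, G.IsMST wf T ∧ e ∉ T) ∨
  (∀ wf : G.E → ℝ, (∀ e', wf e' ∈ G.I e') → ∃ T, G.IsMST wf T ∧ e ∈ T)

end UncGraph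

/-- The instance obtained from `G` by querying the edges of `Q` under true
values `w`: the intervals of queried edges collapse to the revealed values. -/
def UncGraph.restrict (G : UncGraph) (w : G.E → ℝ) (Q : Finset G.E) : UncGraph where
  V := G.V
  E := G.E
  fintV := G.fintV
  fintE := G.fintE
  decV := G.decV
  decE := G.decE
  ends := G.ends
  conn := G.conn
  L := fun e => if e ∈ Q then w e else G.L e
  U := fun e => if e ∈ Q then w e else G.U e
  LU := fun e => by by_cases h : e ∈ Q <;> simp [h, G.LU e]
  pw := fun e => if e ∈ Q then w e else G.pw e
  pw_mem := fun e => by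
    by_cases h : e ∈ Q
    · simp [h]
    · simpa [h] using G.pw_mem e

/-- A deterministic adaptive query algorithm: given the instance and the set of
already queried edges together with the revealed values, it either picks the next
edge to query or stops (`none`).  The lawfulness condition states that the
decision may only depend on the revealed values of already queried edges. -/
structure Algorithm where
  next : ∀ G : UncGraph, Finset G.E → (G.E → ℝ) → Option G.E
  lawful : ∀ (G : UncGraph) (Q : Finset G.E) (w w' : G.E → ℝ),
    (∀ e ∈ Q, w e = w' e) → next G Q w = next G Q w'

namespace Algorithm

/-- The set of edges queried by `A` after `n` steps, on instance `G` with true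
values `w`; the algorithm stops as soon as the queried set is feasible. -/
def runQueries (A : Algorithm) (G : UncGraph) (w : G.E → ℝ) : ℕ → Finset G.E
  | 0 => ∅
  | n + 1 =>
    let Q := A.runQueries G w n
    if G.Feasible w Q then Q
    else
      match A.next G Q w with
      | some e => insert e Q
      | none => Q

/-- The final query set of the run of `A`. -/
def finalQueries (A : Algorithm) (G : UncGraph) (w : G.E → ℝ) : Finset G.E :=
  A.runQueries G w (Fintype.card G.E + 1)

/-- The number of queries made by `A` on instance `G` with true values `w`. -/
def algCost (A : Algorithm) (G : UncGraph) (w : G.E → ℝ) : ℕ :=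
  (A.finalQueries G w).card

/-- `A` solves every instance: it always ends with a feasible query set. -/
def Solves (A : Algorithm) : Prop :=
  ∀ (G : UncGraph) (w : G.E → ℝ), G.Valid w → G.Feasible w (A.finalQueries G w)

/-- `A` is `α`-consistent: on instances with correct predictions it makes at
most `α · |OPT|` queries. -/
def Consistent (A : Algorithm) (α : ℝ) : Prop :=
  ∀ G : UncGraph, (A.algCost G G.pw : ℝ) ≤ α * (G.optCost G.pw : ℝ)

/-- `A` is `β`-robust: it makes at most `β · |OPT|` queries on every instance. -/
def Robust (A : Algorithm) (β : ℝ) : Prop :=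
  ∀ (G : UncGraph) (w : G.E → ℝ), G.Valid w → (A.algCost G w : ℝ) ≤ β * (G.optCost w : ℝ)

/-- Run of a preprocessing algorithm: it stops exactly when `next` returns
`none` (rather than when the queried set is feasible). -/
def runPre (A : Algorithm) (G : UncGraph) (w : G.E → ℝ) : ℕ → Finset G.E
  | 0 => ∅
  | n + 1 =>
    let Q := A.runPre G w n
    match A.next G Q w with
    | some e => insert e Q
    | none => Q

/-- The final query set of a preprocessing run of `A`. -/
def preQueries (A : Algorithm) (G : UncGraph) (w : G.E → ℝ) : Finset G.E :=
  A.runPre G w (Fintype.card G.E + 1)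

end Algorithm

/-!
Every edge `g ≠ li` crossing the cut of `T` at `li` closes a cycle through `li`. Comparing limit
weights (uniqueness of `T = T_L = T_U` makes every exchange of a tree edge for a crossing edge
strictly worse) and using the choice of `li`, such an edge has true weight above `L f`, while every
other edge of the cycle of `f` has true weight below `U f`.

Now let `Q` be feasible with `f ∉ Q`, verifying a tree `T'`. Raising `f` towards `U f` makes it the
strict maximum of its cycle, so `f ∉ T'`. Lowering `f` towards `L f`, and moving `li` above `L f`
if `li ∉ Q`, makes `f` the strict minimum of the cut at `li`, so `f ∈ T'`. Hence `li ∈ Q` and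
`w li ≤ L f`.
-/

open Filter Topology in
theorem exists_between_forall_lt {α ι : Type*} [LinearOrder α] [TopologicalSpace α]
    [OrderTopology α] [DenselyOrdered α] [Finite ι] {a b : α} (hab : a < b) (p : ι → Prop)
    (g : ι → α) (h : ∀ i, p i → a < g i) : ∃ x, a < x ∧ x < b ∧ ∀ i, p i → x < g i := by
  have : NeBot (𝓝[>] a) := nhdsGT_neBot_of_exists_gt ⟨b, hab⟩
  have hg : ∀ᶠ x in 𝓝[>] a, ∀ i, p i → x < g i := eventually_all.2 fun i =>
    eventually_imp_distrib_left.2 fun hi => (eventually_lt_nhds (h i hi)).filter_mono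
      nhdsWithin_le_nhds
  obtain ⟨x, hxb, hxg, hax⟩ := (((eventually_lt_nhds hab).filter_mono nhdsWithin_le_nhds).and
    (hg.and self_mem_nhdsWithin)).exists
  exact ⟨x, hax, hxb, hxg⟩

theorem exists_between_forall_gt {α ι : Type*} [LinearOrder α] [TopologicalSpace α]
    [OrderTopology α] [DenselyOrdered α] [Finite ι] {a b : α} (hab : a < b) (p : ι → Prop)
    (g : ι → α) (h : ∀ i, p i → g i < b) : ∃ x, a < x ∧ x < b ∧ ∀ i, p i → g i < x := by
  obtain ⟨x, hbx, hxa, hxg⟩ :=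
    exists_between_forall_lt (α := αᵒᵈ) (a := OrderDual.toDual b) (b := OrderDual.toDual a) hab p
      (OrderDual.toDual ∘ g) h
  exact ⟨OrderDual.ofDual x, hxa, hbx, hxg⟩

namespace UncGraph

section Connectivity

variable {G : UncGraph} {S R : Finset G.E} {e g : G.E} {a b p q x y : G.V}

theorem exists_ends_eq (e : G.E) : ∃ a b, G.ends e = s(a, b) :=
  Sym2.inductionOn (G.ends e) fun a b => ⟨a, b, rfl⟩

theorem connectsVia_of_mem (he : e ∈ S) (h : G.ends e = s(x, y)) : G.ConnectsVia S x y :=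
  .single ⟨e, he, h⟩

theorem ConnectsVia.symm (h : G.ConnectsVia S x y) : G.ConnectsVia S y x := by
  induction h with
  | refl => exact .refl
  | tail _ hstep ih =>
    obtain ⟨e, he, h⟩ := hstep
    exact .head ⟨e, he, h.trans Sym2.eq_swap⟩ ih

theorem ConnectsVia.mono (h : G.ConnectsVia S x y) (hSR : S ⊆ R) : G.ConnectsVia R x y :=
  Relation.ReflTransGen.mono (fun _ _ ⟨e, he, h⟩ => ⟨e, hSR he, h⟩) _ _ h

theorem ConnectsVia.rewire (h : G.ConnectsVia S x y) (hpq : G.ends e = s(p, q))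
    (hSR : S.erase e ⊆ R) (hR : G.ConnectsVia R p q) : G.ConnectsVia R x y := by
  induction h with
  | refl => exact .refl
  | tail _ hstep ih =>
    obtain ⟨d, hd, hbc⟩ := hstep
    by_cases hde : d = e
    · subst hde
      rcases Sym2.eq_iff.mp (hbc.symm.trans hpq) with ⟨rfl, rfl⟩ | ⟨rfl, rfl⟩
      exacts [ih.trans hR, ih.trans hR.symm]
    · exact ih.tail ⟨d, hSR (Finset.mem_erase.mpr ⟨hde, hd⟩), hbc⟩

theorem ConnectsVia.erase_or (h : G.ConnectsVia S p x) (hpq : G.ends e = s(p, q)) :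
    G.ConnectsVia (S.erase e) p x ∨ G.ConnectsVia (S.erase e) q x := by
  induction h with
  | refl => exact .inl .refl
  | tail _ hstep ih =>
    obtain ⟨d, hd, hbc⟩ := hstep
    by_cases hde : d = e
    · subst hde
      rcases Sym2.eq_iff.mp (hbc.symm.trans hpq) with ⟨-, rfl⟩ | ⟨-, rfl⟩
      exacts [.inr .refl, .inl .refl]
    · have hstep := connectsVia_of_mem (Finset.mem_erase.mpr ⟨hde, hd⟩) hbc
      exact ih.imp (·.trans hstep) (·.trans hstep)

theorem ConnectsVia.exists_cross (h : G.ConnectsVia S a b) (hR : ¬ G.ConnectsVia R a b) :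
    ∃ d ∈ S, ∃ y z, G.ends d = s(y, z) ∧ ¬ G.ConnectsVia R y z := by
  induction h with
  | refl => exact absurd .refl hR
  | @tail y z _ hstep ih =>
    by_cases hy : G.ConnectsVia R a y
    · obtain ⟨d, hd, hyz⟩ := hstep
      exact ⟨d, hd, y, z, hyz, fun hR' => hR (hy.trans hR')⟩
    · exact ih hy

theorem inCut_iff (hg : G.ends g = s(a, b)) {T : Finset G.E} :
    G.InCut T e g ↔ ¬ G.ConnectsVia (T.erase e) a b := by
  refine ⟨fun h => h a b hg, fun h u v huv hc => h ?_⟩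
  rcases Sym2.eq_iff.mp (huv.symm.trans hg) with ⟨rfl, rfl⟩ | ⟨rfl, rfl⟩
  exacts [hc, hc.symm]

theorem InCut.notMem {T : Finset G.E} (h : G.InCut T e g) (hge : g ≠ e) : g ∉ T := by
  intro hgT
  obtain ⟨a, b, hab⟩ := G.exists_ends_eq g
  exact h a b hab (connectsVia_of_mem (Finset.mem_erase.mpr ⟨hge, hgT⟩) hab)

end Connectivity

section SpanningTree

variable {G : UncGraph} {S T : Finset G.E} {e g : G.E} {p q : G.V}

theorem card_le_card_add_one_of_connectsVia (h : ∀ u v : G.V, G.ConnectsVia S u v) :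
    Fintype.card G.V ≤ S.card + 1 := by
  rcases isEmpty_or_nonempty G.V with hV | hV
  · simp
  let H := SimpleGraph.fromEdgeSet (G.ends '' (S : Set G.E))
  have hH : H.Connected := by
    refine ⟨fun u v => ?_⟩
    induction h u v with
    | refl => rfl
    | @tail y z _ hstep ih =>
      obtain ⟨d, hd, hyz⟩ := hstep
      by_cases hne : y = z
      · exact hne ▸ ih
      · exact ih.trans (SimpleGraph.Adj.reachable
          ((SimpleGraph.fromEdgeSet_adj _).mpr ⟨⟨d, hd, hyz⟩, hne⟩))
  calc Fintype.card G.V = Nat.card G.V := Nat.card_eq_fintype_card.symm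
    _ ≤ Nat.card H.edgeSet + 1 := hH.card_vert_le_card_edgeSet_add_one
    _ ≤ S.card + 1 := by
      gcongr
      rw [Nat.card_coe_set_eq, SimpleGraph.edgeSet_fromEdgeSet]
      calc _ ≤ (G.ends '' (S : Set G.E)).ncard := Set.ncard_le_ncard Set.sdiff_subset
        _ ≤ (S : Set G.E).ncard := Set.ncard_image_le S.finite_toSet
        _ = S.card := Set.ncard_coe_finset S

theorem IsSpanningTree.not_connectsVia_erase (hS : G.IsSpanningTree S) (he : e ∈ S)
    (hpq : G.ends e = s(p, q)) : ¬ G.ConnectsVia (S.erase e) p q := by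
  intro hconn
  have := card_le_card_add_one_of_connectsVia fun u v =>
    (hS.1 u v).rewire hpq subset_rfl hconn
  have := Finset.card_erase_add_one he
  have := hS.2
  omega

theorem IsSpanningTree.insert_erase (hT : G.IsSpanningTree T) (he : e ∈ T) (hg : g ∉ T)
    (hcut : G.InCut T e g) : G.IsSpanningTree (insert g (T.erase e)) := by
  obtain ⟨p, q, hpq⟩ := G.exists_ends_eq e
  obtain ⟨a, b, hab⟩ := G.exists_ends_eq g
  have hsub : T.erase e ⊆ insert g (T.erase e) := Finset.subset_insert _ _
  have hg' : G.ConnectsVia (insert g (T.erase e)) a b :=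
    connectsVia_of_mem (Finset.mem_insert_self _ _) hab
  have hcut' := (inCut_iff hab).mp hcut
  have hpq' : G.ConnectsVia (insert g (T.erase e)) p q := by
    rcases (hT.1 p a).erase_or hpq with ha | ha <;> rcases (hT.1 p b).erase_or hpq with hb | hb
    · exact absurd (ha.symm.trans hb) hcut'
    · exact ((ha.mono hsub).trans hg').trans (hb.mono hsub).symm
    · exact (((hb.mono hsub).trans hg'.symm).trans (ha.mono hsub).symm)
    · exact absurd (ha.symm.trans hb) hcut'
  refine ⟨fun u v => (hT.1 u v).rewire hpq hsub hpq', ?_⟩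
  rw [Finset.card_insert_of_notMem (fun h => hg (Finset.mem_of_mem_erase h)),
    Finset.card_erase_add_one he, hT.2]

theorem sum_insert_erase_add (wf : G.E → ℝ) (he : e ∈ T) (hg : g ∉ T) :
    ∑ x ∈ insert g (T.erase e), wf x + wf e = ∑ x ∈ T, wf x + wf g := by
  rw [Finset.sum_insert (fun h => hg (Finset.mem_of_mem_erase h))]
  linarith [Finset.sum_erase_add T wf he]

theorem IsMST.le_of_inCut {wf : G.E → ℝ} (hT : G.IsMST wf T) (he : e ∈ T) (hg : g ∉ T)
    (hcut : G.InCut T e g) : wf e ≤ wf g := by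
  have := hT.2 _ (hT.1.insert_erase he hg hcut)
  have := sum_insert_erase_add wf he hg
  linarith

theorem IsMST.insert_erase {wf : G.E → ℝ} (hT : G.IsMST wf T) (he : e ∈ T) (hg : g ∉ T)
    (hcut : G.InCut T e g) (hle : wf g ≤ wf e) : G.IsMST wf (insert g (T.erase e)) := by
  refine ⟨hT.1.insert_erase he hg hcut, fun T' hT' => ?_⟩
  have := hT.2 T' hT'
  have := sum_insert_erase_add wf he hg
  linarith

end SpanningTree

section Cycles

variable {G : UncGraph} {S C : Finset G.E} {e : G.E} {a b p q : G.V}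

theorem incCount_insert (he : e ∉ S) (hab : G.ends e = s(a, b)) (x : G.V) :
    G.incCount (insert e S) x =
      G.incCount S x + ((if x = a then 1 else 0) + (if x = b then 1 else 0)) := by
  rw [incCount, Finset.sum_insert he, add_comm, hab]
  congr 1
  simp only [Sym2.eq_iff, Sym2.mem_iff]
  split_ifs <;> grind

theorem even_sum_incCount (K : Finset G.V)
    (hK : ∀ e ∈ S, ∀ a b, G.ends e = s(a, b) → (a ∈ K ↔ b ∈ K)) :
    Even (∑ x ∈ K, G.incCount S x) := by
  induction S using Finset.induction_on with
  | empty => simp [incCount]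
  | @insert e S he ih =>
    obtain ⟨a, b, hab⟩ := G.exists_ends_eq e
    simp only [incCount_insert he hab, Finset.sum_add_distrib, Finset.sum_ite_eq',
      (hK e (Finset.mem_insert_self e S) a b hab)]
    refine (ih fun d hd => hK d (Finset.mem_insert_of_mem hd)).add ?_
    split_ifs <;> simp

/-- Otherwise the vertices joined to `p` in `C.erase e` have even total degree there, as no
edge leaves them, and odd total degree, as their degrees in `C` are even and only `p` lost an
edge end. -/
theorem IsCycle.connectsVia_erase (hC : G.IsCycle C) (he : e ∈ C) (hpq : G.ends e = s(p, q)) :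
    G.ConnectsVia (C.erase e) p q := by
  by_contra hconn
  set K := Finset.univ.filter (G.ConnectsVia (C.erase e) p)
  have hpK : p ∈ K := Finset.mem_filter.mpr ⟨Finset.mem_univ _, .refl⟩
  have hqK : q ∉ K := by simpa [K] using hconn
  have hDeven := even_sum_incCount (S := C.erase e) K fun d hd a b hab => by
    have hab' := connectsVia_of_mem hd hab
    simp only [K, Finset.mem_filter, Finset.mem_univ, true_and]
    exact ⟨fun h => h.trans hab', fun h => h.trans hab'.symm⟩
  have hCeven : Even (∑ x ∈ K, G.incCount C x) :=
    Finset.even_sum _ fun x _ => by rcases hC.2.1 x with h | h <;> simp [h]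
  have hsum : ∑ x ∈ K, G.incCount C x = ∑ x ∈ K, G.incCount (C.erase e) x + 1 := by
    conv_lhs => rw [← Finset.insert_erase he]
    simp only [incCount_insert (Finset.notMem_erase e C) hpq, Finset.sum_add_distrib,
      Finset.sum_ite_eq', if_pos hpK, if_neg hqK, add_zero]
  rw [hsum] at hCeven
  exact Nat.not_even_iff_odd.mpr hDeven.add_one hCeven

end Cycles

/-- `G.Walk S u l v`: a walk from `u` to `v` along edges of `S`, where each entry `(e, x)` of `l`
records an edge together with the vertex it leads to. -/
inductive Walk (G : UncGraph) (S : Finset G.E) : G.V → List (G.E × G.V) → G.V → Prop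
  | nil (v : G.V) : Walk G S v [] v
  | cons {u x v : G.V} {e : G.E} {l : List (G.E × G.V)} :
      e ∈ S → G.ends e = s(u, x) → Walk G S x l v → Walk G S u ((e, x) :: l) v

namespace Walk

variable {G : UncGraph} {S : Finset G.E} {u v x : G.V} {l : List (G.E × G.V)}

theorem edges_subset (h : G.Walk S u l v) : (l.map Prod.fst).toFinset ⊆ S := by
  induction h with
  | nil => simp
  | cons he _ _ ih => simpa [Finset.insert_subset_iff] using ⟨he, ih⟩

theorem connectsVia (h : G.Walk S u l v) (hx : x ∈ u :: l.map Prod.snd) :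
    G.ConnectsVia (l.map Prod.fst).toFinset u x := by
  induction h with
  | nil => rw [List.mem_singleton.mp hx]; exact .refl
  | @cons u y v e l _ hends _ ih =>
    rcases List.mem_cons.mp hx with rfl | hx
    · exact .refl
    · have hsub : (l.map Prod.fst).toFinset ⊆ (((e, y) :: l).map Prod.fst).toFinset := by simp
      exact (connectsVia_of_mem (by simp) hends).trans ((ih hx).mono hsub)

theorem mem_support_of_mem_ends (h : G.Walk S u l v) {d : G.E} (hd : d ∈ l.map Prod.fst)
    (hx : x ∈ G.ends d) : x ∈ u :: l.map Prod.snd := by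
  induction h with
  | nil => simp at hd
  | @cons u y v e l _ hends _ ih =>
    rcases List.mem_cons.mp hd with rfl | hd
    · rw [hends, Sym2.mem_iff] at hx
      rcases hx with rfl | rfl <;> simp
    · exact List.mem_cons_of_mem _ (ih hd)

theorem end_mem_support (h : G.Walk S u l v) : v ∈ u :: l.map Prod.snd := by
  induction h with
  | nil => simp
  | cons _ _ _ ih => exact List.mem_cons_of_mem _ ih

theorem exists_suffix (h : G.Walk S u l v) (hx : x ∈ u :: l.map Prod.snd) :
    ∃ l', G.Walk S x l' v ∧ (x :: l'.map Prod.snd) <:+ (u :: l.map Prod.snd) := by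
  induction h with
  | nil => exact ⟨[], by rw [List.mem_singleton.mp hx]; exact ⟨.nil _, List.suffix_refl _⟩⟩
  | @cons u y v e l he hends hw ih =>
    rcases List.mem_cons.mp hx with rfl | hx
    · exact ⟨_, .cons he hends hw, List.suffix_refl _⟩
    · obtain ⟨l', hl', hsuf⟩ := ih hx
      exact ⟨l', hl', hsuf.trans (List.suffix_cons _ _)⟩

theorem incCount_add (h : G.Walk S u l v) (hnd : (u :: l.map Prod.snd).Nodup) (x : G.V) :
    G.incCount (l.map Prod.fst).toFinset x + ((if x = u then 1 else 0) + (if x = v then 1 else 0))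
      = if x ∈ u :: l.map Prod.snd then 2 else 0 := by
  induction h with
  | nil w => by_cases hx : x = w <;> simp [hx, incCount]
  | @cons u y v e l _ hends hw ih =>
    obtain ⟨hu, hnd'⟩ := List.nodup_cons.mp hnd
    have he : e ∉ (l.map Prod.fst).toFinset := fun he =>
      hu (hw.mem_support_of_mem_ends (List.mem_toFinset.mp he) (by simp [hends]))
    have := ih hnd'
    simp only [List.map_cons, List.toFinset_cons, incCount_insert he hends, List.mem_cons] at this ⊢
    by_cases hxu : x = u
    · subst hxu
      have hv : x ≠ v := fun hv => hu (hv ▸ hw.end_mem_support)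
      simp_all
    · simp only [hxu, if_false, false_or] at this ⊢
      omega

end Walk

section FundamentalCycle

variable {G : UncGraph} {S C T : Finset G.E} {d e f g : G.E} {u v : G.V}

theorem IsCycleOf.mem_of_ne (hC : G.IsCycleOf T f C) (hd : d ∈ C) (hdf : d ≠ f) : d ∈ T :=
  (Finset.mem_insert.mp (hC.2.2 hd)).resolve_left hdf

theorem exists_walk_nodup (h : G.ConnectsVia S u v) :
    ∃ l, G.Walk S u l v ∧ (u :: l.map Prod.snd).Nodup := by
  induction h using Relation.ReflTransGen.head_induction_on with
  | refl => exact ⟨[], .nil v, by simp⟩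
  | @head u y hstep _ ih =>
    obtain ⟨e, he, hends⟩ := hstep
    obtain ⟨l, hl, hnd⟩ := ih
    by_cases hu : u ∈ y :: l.map Prod.snd
    · obtain ⟨l', hl', hsuf⟩ := hl.exists_suffix hu
      exact ⟨l', hl', hnd.sublist hsuf.sublist⟩
    · exact ⟨_, .cons he hends hl, List.nodup_cons.mpr ⟨hu, hnd⟩⟩

/-- The fundamental cycle: `g` together with a path of `T` joining its ends. -/
theorem exists_isCycleOf (hT : ∀ u v : G.V, G.ConnectsVia T u v) (hg : g ∉ T) :
    ∃ C, G.IsCycleOf T g C := by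
  obtain ⟨a, b, hab⟩ := G.exists_ends_eq g
  obtain ⟨l, hl, hnd⟩ := exists_walk_nodup (hT a b)
  set P := (l.map Prod.fst).toFinset
  have hPT : P ⊆ T := hl.edges_subset
  have hgP : g ∉ P := fun h => hg (hPT h)
  have hdeg (x : G.V) : G.incCount (insert g P) x = if x ∈ a :: l.map Prod.snd then 2 else 0 := by
    rw [incCount_insert hgP hab, hl.incCount_add hnd]
  have hconn (x : G.V) (hx : G.incCount (insert g P) x ≠ 0) : G.ConnectsVia (insert g P) a x := by
    rw [hdeg] at hx
    exact (hl.connectsVia (by_contra fun h => hx (if_neg h))).mono (Finset.subset_insert _ _)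
  refine ⟨insert g P, ⟨⟨g, Finset.mem_insert_self _ _⟩, fun x => ?_,
    fun x y hx hy => (hconn x hx).symm.trans (hconn y hy)⟩, Finset.mem_insert_self _ _,
    Finset.insert_subset_insert _ hPT⟩
  rw [hdeg]
  split_ifs <;> simp

theorem IsSpanningTree.inCut_of_isCycleOf (hT : G.IsSpanningTree T) (hC : G.IsCycleOf T f C)
    (hd : d ∈ C) (hdf : d ≠ f) : G.InCut T d f := by
  obtain ⟨a, b, hab⟩ := G.exists_ends_eq f
  obtain ⟨y, z, hyz⟩ := G.exists_ends_eq d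
  refine (inCut_iff hab).mpr fun hconn => hT.not_connectsVia_erase (hC.mem_of_ne hd hdf) hyz ?_
  have hsub : C.erase d ⊆ insert f (T.erase d) := fun x hx => by
    obtain ⟨hxd, hxC⟩ := Finset.mem_erase.mp hx
    rcases Finset.mem_insert.mp (hC.2.2 hxC) with rfl | hxT
    exacts [Finset.mem_insert_self _ _, Finset.mem_insert_of_mem (Finset.mem_erase.mpr ⟨hxd, hxT⟩)]
  exact ((hC.1.connectsVia_erase hd hyz).mono hsub).rewire hab
    (Finset.erase_insert_subset _ _) hconn

theorem mem_of_isCycleOf_of_inCut (hC : G.IsCycleOf T g C) (hcut : G.InCut T e g) : e ∈ C := by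
  obtain ⟨a, b, hab⟩ := G.exists_ends_eq g
  by_contra he
  refine (inCut_iff hab).mp hcut ((hC.1.connectsVia_erase hC.2.1 hab).mono fun x hx => ?_)
  obtain ⟨hxg, hxC⟩ := Finset.mem_erase.mp hx
  exact Finset.mem_erase.mpr ⟨fun h => he (h ▸ hxC), hC.mem_of_ne hxC hxg⟩

end FundamentalCycle

section MST

variable {G : UncGraph} {wf : G.E → ℝ} {C T T' : Finset G.E} {e f : G.E}

/-- The cycle property of minimum spanning trees. -/
theorem IsMST.notMem_of_isCycle (hT : G.IsMST wf T) (hC : G.IsCycle C) (hf : f ∈ C)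
    (hmax : ∀ d ∈ C, d ≠ f → wf d < wf f) : f ∉ T := by
  intro hfT
  obtain ⟨a, b, hab⟩ := G.exists_ends_eq f
  obtain ⟨d, hd, y, z, hyz, hcross⟩ := (hC.connectsVia_erase hf hab).exists_cross
    (hT.1.not_connectsVia_erase hfT hab)
  obtain ⟨hdf, hdC⟩ := Finset.mem_erase.mp hd
  have hdT : d ∉ T := fun hdT => hcross (connectsVia_of_mem (Finset.mem_erase.mpr ⟨hdf, hdT⟩) hyz)
  exact (hT.le_of_inCut hfT hdT ((inCut_iff hyz).mpr hcross)).not_gt (hmax d hdC hdf)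

/-- The cut property of minimum spanning trees. -/
theorem IsMST.mem_of_inCut (hT' : G.IsMST wf T') (hcut : G.InCut T e f)
    (hmin : ∀ g, g ≠ f → G.InCut T e g → wf f < wf g) : f ∈ T' := by
  by_contra hfT'
  obtain ⟨a, b, hab⟩ := G.exists_ends_eq f
  obtain ⟨C, hC⟩ := exists_isCycleOf hT'.1.1 hfT'
  obtain ⟨d, hd, y, z, hyz, hcross⟩ := (hC.1.connectsVia_erase hC.2.1 hab).exists_cross
    ((inCut_iff hab).mp hcut)
  obtain ⟨hdf, hdC⟩ := Finset.mem_erase.mp hd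
  exact (hT'.le_of_inCut (hC.mem_of_ne hdC hdf) hfT' (hT'.1.inCut_of_isCycleOf hC hdC hdf)).not_gt
    (hmin d hdf ((inCut_iff hyz).mpr hcross))

end MST

section LimitTrees

variable {G : UncGraph} {T : Finset G.E} {e g : G.E}

theorem UniqueLimitTrees.isSpanningTree (hT : G.UniqueLimitTrees T) : G.IsSpanningTree T := by
  obtain ⟨ε₀, hε₀, hMST⟩ := hT.1
  exact (hMST (ε₀ / 2) (by linarith) (by linarith)).1

theorem exists_limit_isMST_insert_erase {W : ℝ → G.E → ℝ}
    (hT : ∃ ε₀ > (0 : ℝ), ∀ ε : ℝ, 0 < ε → ε < ε₀ → G.IsMST (W ε) T)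
    (he : e ∈ T) (hg : g ∉ T) (hcut : G.InCut T e g)
    (hle : ∃ ε₀ > (0 : ℝ), ∀ ε : ℝ, 0 < ε → ε < ε₀ → W ε g ≤ W ε e) :
    ∃ ε₀ > (0 : ℝ), ∀ ε : ℝ, 0 < ε → ε < ε₀ → G.IsMST (W ε) (insert g (T.erase e)) := by
  obtain ⟨ε₁, hε₁, hT⟩ := hT
  obtain ⟨ε₂, hε₂, hle⟩ := hle
  exact ⟨min ε₁ ε₂, lt_min hε₁ hε₂, fun ε hε hεlt =>
    (hT ε hε (hεlt.trans_le (min_le_left _ _))).insert_erase he hg hcut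
      (hle ε hε (hεlt.trans_le (min_le_right _ _)))⟩

theorem UniqueLimitTrees.not_lowerWeight_le (hT : G.UniqueLimitTrees T) (he : e ∈ T) (hg : g ∉ T)
    (hcut : G.InCut T e g) :
    ¬ ∃ ε₀ > (0 : ℝ), ∀ ε : ℝ, 0 < ε → ε < ε₀ → G.lowerWeight ε g ≤ G.lowerWeight ε e :=
  fun hle => hg (hT.2.2.1 _ (exists_limit_isMST_insert_erase hT.1 he hg hcut hle) ▸
    Finset.mem_insert_self _ _)

theorem UniqueLimitTrees.not_upperWeight_le (hT : G.UniqueLimitTrees T) (he : e ∈ T) (hg : g ∉ T)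
    (hcut : G.InCut T e g) :
    ¬ ∃ ε₀ > (0 : ℝ), ∀ ε : ℝ, 0 < ε → ε < ε₀ → G.upperWeight ε g ≤ G.upperWeight ε e :=
  fun hle => hg (hT.2.2.2 _ (exists_limit_isMST_insert_erase hT.2.1 he hg hcut hle) ▸
    Finset.mem_insert_self _ _)

theorem UniqueLimitTrees.L_le_of_inCut (hT : G.UniqueLimitTrees T) (he : e ∈ T) (hg : g ∉ T)
    (hcut : G.InCut T e g) : G.L e ≤ G.L g := by
  by_contra! hlt
  refine hT.not_lowerWeight_le he hg hcut ⟨G.L e - G.L g, by linarith, fun ε hε hεlt => ?_⟩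
  unfold lowerWeight
  split_ifs <;> linarith

theorem UniqueLimitTrees.L_lt_of_inCut (hT : G.UniqueLimitTrees T) (he : e ∈ T) (hg : g ∉ T)
    (hcut : G.InCut T e g) (h : G.L e < G.U e ∨ G.L g = G.U g) : G.L e < G.L g := by
  by_contra! hle
  refine hT.not_lowerWeight_le he hg hcut ⟨1, one_pos, fun ε hε _ => ?_⟩
  unfold lowerWeight
  rcases h with h | h <;> split_ifs <;> linarith

theorem UniqueLimitTrees.U_le_of_inCut (hT : G.UniqueLimitTrees T) (he : e ∈ T) (hg : g ∉ T)
    (hcut : G.InCut T e g) : G.U e ≤ G.U g := by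
  by_contra! hlt
  refine hT.not_upperWeight_le he hg hcut ⟨G.U e - G.U g, by linarith, fun ε hε hεlt => ?_⟩
  unfold upperWeight
  split_ifs <;> linarith

theorem UniqueLimitTrees.U_lt_of_inCut (hT : G.UniqueLimitTrees T) (he : e ∈ T) (hg : g ∉ T)
    (hcut : G.InCut T e g) (h : G.L e = G.U e ∨ G.L g < G.U g) : G.U e < G.U g := by
  by_contra! hle
  refine hT.not_upperWeight_le he hg hcut ⟨1, one_pos, fun ε hε _ => ?_⟩
  unfold upperWeight
  rcases h with h | h <;> split_ifs <;> linarith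

end LimitTrees

section Queries

variable {G : UncGraph} {w v : G.E → ℝ} {Q C T T' : Finset G.E} {e f li : G.E} {x : ℝ}

theorem mem_I_iff_of_lt (h : G.L e < G.U e) : x ∈ G.I e ↔ G.L e < x ∧ x < G.U e := by
  simp [I, h.ne]

theorem mem_I_iff_of_eq (h : G.L e = G.U e) : x ∈ G.I e ↔ x = G.L e := by
  simpa [I, h] using fun h1 h2 => absurd (h1.trans h2) (lt_irrefl _)

theorem le_U_of_mem_I (hx : x ∈ G.I e) : x ≤ G.U e := by
  rcases hx with ⟨h, rfl⟩ | ⟨-, hx⟩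
  exacts [h.le, hx.le]

theorem Compatible.update (hv : G.Compatible w Q v) (hfQ : f ∉ Q) (hx : x ∈ G.I f) :
    G.Compatible w Q (Function.update v f x) := by
  refine ⟨fun e he => ?_, fun e => ?_⟩
  · rw [Function.update_of_ne (ne_of_mem_of_not_mem he hfQ)]
    exact hv.1 e he
  · by_cases hef : e = f
    · subst hef; simpa using hx
    · simpa [hef] using hv.2 e

/-- Raise `f` to just below `U f`, making it the strict maximum of the cycle. -/
theorem Verifies.notMem_of_isCycle (hT' : G.Verifies w Q T') (hv : G.Compatible w Q v)
    (hfQ : f ∉ Q) (hf : G.L f < G.U f) (hC : G.IsCycle C) (hfC : f ∈ C)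
    (hlt : ∀ d ∈ C, d ≠ f → v d < G.U f) : f ∉ T' := by
  obtain ⟨y, hfy, hyf, hy⟩ := exists_between_forall_gt hf (fun d => d ∈ C ∧ d ≠ f) v
    fun d hd => hlt d hd.1 hd.2
  refine (hT' _ (hv.update hfQ ((mem_I_iff_of_lt hf).mpr ⟨hfy, hyf⟩))).notMem_of_isCycle hC hfC
    fun d hd hdf => ?_
  simpa [hdf] using hy d ⟨hd, hdf⟩

/-- Lower `f` to just above `L f`, making it the strict minimum of the cut. -/
theorem Verifies.mem_of_inCut (hT' : G.Verifies w Q T') (hv : G.Compatible w Q v)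
    (hfQ : f ∉ Q) (hf : G.L f < G.U f) (hcut : G.InCut T e f)
    (hgt : ∀ g, g ≠ f → G.InCut T e g → G.L f < v g) : f ∈ T' := by
  obtain ⟨y, hfy, hyf, hy⟩ := exists_between_forall_lt hf (fun g => g ≠ f ∧ G.InCut T e g) v
    fun g hg => hgt g hg.1 hg.2
  refine (hT' _ (hv.update hfQ ((mem_I_iff_of_lt hf).mpr ⟨hfy, hyf⟩))).mem_of_inCut hcut
    fun g hgf hg => ?_
  simpa [hgf] using hy g ⟨hgf, hg⟩

theorem UniqueLimitTrees.lt_of_inter_nonempty (hT : G.UniqueLimitTrees T) (he : e ∈ T)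
    (hf : f ∉ T) (hcut : G.InCut T e f) (hint : (G.I e ∩ G.I f).Nonempty) :
    G.L e < G.L f ∧ G.L f < G.U e ∧ G.L f < G.U f := by
  obtain ⟨x, hxe, hxf⟩ := hint
  have hf' : G.L f < G.U f := by
    refine (G.LU f).lt_of_ne fun hf' => ?_
    have hU := hT.U_le_of_inCut he hf hcut
    rw [(mem_I_iff_of_eq hf').mp hxf] at hxe
    rcases (G.LU e).lt_or_eq with he' | he'
    · linarith [((mem_I_iff_of_lt he').mp hxe).2]
    · linarith [hT.U_lt_of_inCut he hf hcut (.inl he'), (mem_I_iff_of_eq he').mp hxe]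
  have hxf' := (mem_I_iff_of_lt hf').mp hxf
  have he' : G.L e < G.U e := by
    refine (G.LU e).lt_of_ne fun he' => ?_
    linarith [(mem_I_iff_of_eq he').mp hxe, hT.L_le_of_inCut he hf hcut]
  exact ⟨hT.L_lt_of_inCut he hf hcut (.inl he'), by linarith [((mem_I_iff_of_lt he').mp hxe).2],
    hf'⟩

/-- A nontrivial `g` closes a cycle through `li`, so `hfirst` forces `L f ≤ L g`; a trivial `g`
has weight `U g ≥ U li`. -/
theorem UniqueLimitTrees.L_lt_weight_of_inCut (hw : G.Valid w)
    (hT : G.UniqueLimitTrees T) (hli : li ∈ T) (hLU : G.L f < G.U li)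
    (hfirst : ∀ f', f' ∉ T → f' ≠ f → G.L f' < G.L f → ∀ C', G.IsCycleOf T f' C' → li ∉ C')
    {g : G.E} (hcut : G.InCut T li g) (hgli : g ≠ li) (hgf : g ≠ f) : G.L f < w g := by
  have hg := hcut.notMem hgli
  rcases (G.LU g).lt_or_eq with hg' | hg'
  · obtain ⟨C', hC'⟩ := exists_isCycleOf hT.isSpanningTree.1 hg
    have := not_lt.mp fun hlt => hfirst g hg hgf hlt C' hC' (mem_of_isCycleOf_of_inCut hC' hcut)
    linarith [((mem_I_iff_of_lt hg').mp (hw g)).1]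
  · linarith [(mem_I_iff_of_eq hg').mp (hw g), hT.U_le_of_inCut hli hg hcut]

theorem UniqueLimitTrees.mem_and_notMem_I_of_feasible (hw : G.Valid w)
    (hT : G.UniqueLimitTrees T) (hf : f ∉ T) (hC : G.IsCycleOf T f C) (hli : li ∈ C)
    (hlif : li ≠ f) (hint : (G.I li ∩ G.I f).Nonempty)
    (hfirst : ∀ f', f' ∉ T → f' ≠ f → G.L f' < G.L f → ∀ C', G.IsCycleOf T f' C' → li ∉ C')
    (hQ : G.Feasible w Q) (hfQ : f ∉ Q) : li ∈ Q ∧ w li ∉ G.I f := by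
  have hTsp := hT.isSpanningTree
  have hliT := hC.mem_of_ne hli hlif
  have hcut := hTsp.inCut_of_isCycleOf hC hli hlif
  obtain ⟨hLli, hLfUli, hLfUf⟩ := hT.lt_of_inter_nonempty hliT hf hcut hint
  obtain ⟨T', hT'⟩ := hQ
  have hw' : G.Compatible w Q w := ⟨fun _ _ => rfl, hw⟩
  have hfT' : f ∉ T' := hT'.notMem_of_isCycle hw' hfQ hLfUf hC.1 hC.2.1 fun d hd hdf =>
    (le_U_of_mem_I (hw d)).trans_lt
      (hT.U_lt_of_inCut (hC.mem_of_ne hd hdf) hf (hTsp.inCut_of_isCycleOf hC hd hdf) (.inr hLfUf))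
  have key (α : ℝ) (hα : α ∈ G.I li) (hαf : G.L f < α) (hαQ : li ∈ Q → α = w li) : False := by
    have hv : G.Compatible w Q (Function.update w li α) := by
      by_cases hliQ : li ∈ Q
      · rwa [hαQ hliQ, Function.update_eq_self]
      · exact hw'.update hliQ hα
    refine hfT' (hT'.mem_of_inCut hv hfQ hLfUf hcut fun g hgf hg => ?_)
    by_cases hgli : g = li
    · simpa [hgli] using hαf
    · simpa [hgli] using hT.L_lt_weight_of_inCut hw hliT hLfUli hfirst hg hgli hgf
  refine ⟨by_contra fun hliQ => key ((G.L f + G.U li) / 2) ?_ (by linarith) (absurd · hliQ),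
    fun hwf => key (w li) (hw li) ((mem_I_iff_of_lt hLfUf).mp hwf).1 fun _ => rfl⟩
  exact (mem_I_iff_of_lt (hLli.trans hLfUli)).mpr ⟨by linarith, by linarith⟩

end Queries

end UncGraph

/-- in an instance with unique `T_L = T_U`, let `f ∉ T_L` and
let `l` be an edge on the cycle `C` closed by `f` with `I_l ∩ I_f ≠ ∅` that does
not lie on the cycle closed by any earlier edge (smaller lower limit) outside
`T_L`. Then `{l, f}` is a witness set; moreover if `w l ∈ I_f` then `f` is
mandatory. -/
theorem cut_witness_set
    (G : UncGraph) (w : G.E → ℝ) (hw : G.Valid w)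
    (T : Finset G.E) (hT : G.UniqueLimitTrees T)
    (f : G.E) (hf : f ∉ T)
    (C : Finset G.E) (hC : G.IsCycleOf T f C)
    (li : G.E) (hli : li ∈ C) (hlif : li ≠ f)
    (hint : (G.I li ∩ G.I f).Nonempty)
    (hfirst : ∀ f', f' ∉ T → f' ≠ f → G.L f' < G.L f →
      ∀ C', G.IsCycleOf T f' C' → li ∉ C') :
    G.IsWitnessSet w {li, f} ∧ (w li ∈ G.I f → G.Mandatory w f) := by
  have key (Q : Finset G.E) (hQ : G.Feasible w Q) (hfQ : f ∉ Q) :=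
    hT.mem_and_notMem_I_of_feasible hw hf hC hli hlif hint hfirst hQ hfQ
  refine ⟨fun Q hQ => ?_, fun hwli Q hQ => by_contra fun hfQ => (key Q hQ hfQ).2 hwli⟩
  by_cases hfQ : f ∈ Q
  · exact ⟨f, by simp, hfQ⟩
  · exact ⟨li, by simp, (key Q hQ hfQ).1⟩
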